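/- arXiv:1304.5866 — 5 statements merged into one kernel-verified Lean document; each statement's English description precedes it below -/
import Mathlib

section
/- For κ ∈ ℂ and f twice continuously differentiable, the square of the one-variable Dunkl-type operator is given by T_κ² f(x) = f''(x) + (2κ/x) f'(x) + κ(κ-1)(f(x)-f(0))/x² - κ(κ+1) f'(0)/x for x ≠ 0. -/
/-- The one-variable Dunkl-type operator with projection term,
extended by continuity at `x = 0` by the value `(1 + κ) f'(0)`. -/
noncomputable def Tkappa (κ : ℂ) (f : ℝ → ℂ) (x : ℝ) : ℂ :=
  if x = 0 then (1 + κ) * deriv f 0 else deriv f x + κ * (f x - f 0) / x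

/-!
Away from `0` the operator is given by the explicit formula `f' + κ (f - f 0) / x`, so near
`x ≠ 0` the quotient rule differentiates `T_κ f`. The term `-κ (κ + 1) f'(0) / x` comes from
the value `(T_κ f)(0) = (1 + κ) f'(0)` of the continuous extension at the origin.
-/

open Filter Topology

theorem Tkappa_of_ne_zero (κ : ℂ) (f : ℝ → ℂ) {x : ℝ} (hx : x ≠ 0) :
    Tkappa κ f x = deriv f x + κ * (f x - f 0) / x :=
  if_neg hx

theorem Tkappa_zero (κ : ℂ) (f : ℝ → ℂ) : Tkappa κ f 0 = (1 + κ) * deriv f 0 :=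
  if_pos rfl

theorem hasDerivAt_Tkappa (κ : ℂ) {f : ℝ → ℂ} {x : ℝ} (hx : x ≠ 0)
    (hf : DifferentiableAt ℝ f x) (hf' : DifferentiableAt ℝ (deriv f) x) :
    HasDerivAt (Tkappa κ f)
      (deriv (deriv f) x + κ * (deriv f x * x - (f x - f 0)) / (x : ℂ) ^ 2) x := by
  have hquot : HasDerivAt (fun y : ℝ => κ * (f y - f 0) / (y : ℂ))
      ((κ * deriv f x * x - κ * (f x - f 0) * 1) / (x : ℂ) ^ 2) x :=
    ((hf.hasDerivAt.sub_const (f 0)).const_mul κ).div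
      (hasDerivAt_id x).ofReal_comp (by exact_mod_cast hx)
  have hTkappa :
      Tkappa κ f =ᶠ[𝓝 x] fun y : ℝ => deriv f y + κ * (f y - f 0) / (y : ℂ) := by
    filter_upwards [isOpen_ne.mem_nhds hx] with y hy
    exact Tkappa_of_ne_zero κ f hy
  exact ((hf'.hasDerivAt.add hquot).congr_of_eventuallyEq hTkappa).congr_deriv (by ring)

theorem Tkappa_sq (κ : ℂ) (f : ℝ → ℂ) (hf : ContDiff ℝ 2 f) (x : ℝ) (hx : x ≠ 0) :
    Tkappa κ (Tkappa κ f) x =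
      deriv (deriv f) x + (2 * κ / (x : ℂ)) * deriv f x
        + κ * (κ - 1) * (f x - f 0) / (x : ℂ) ^ 2
        - κ * (κ + 1) * deriv f 0 / (x : ℂ) := by
  have hf' : Differentiable ℝ (deriv f) := (hf.deriv' (n := 1)).differentiable one_ne_zero
  have hderiv := (hasDerivAt_Tkappa κ hx (hf.differentiable two_ne_zero x) (hf' x)).deriv
  have hxC : (x : ℂ) ≠ 0 := by exact_mod_cast hx
  rw [Tkappa_of_ne_zero κ _ hx, hderiv, Tkappa_of_ne_zero κ f hx, Tkappa_zero]
  field_simp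
  ring
end

section
/- For real κ > 0 and every x ∈ ℝ \ {0}, lim_{λ→+∞} 𝐌_κ(iλx) = 0. -/
/-!
Up to the constant `Γ(κ)⁻¹`, `𝐌_κ(iλx)` is the Fourier transform at frequency `λx` of the
function `(1 - t)^(κ - 1)` cut off to `(0, 1]`, so it vanishes as `λ → ∞` by the
Riemann–Lebesgue lemma.
-/

open MeasureTheory Filter Topology Complex

variable {E : Type*} [NormedAddCommGroup E] [NormedSpace ℂ E]

theorem Real.tendsto_integral_cexp_mul_I_smul_cocompact (f : ℝ → E) :
    Tendsto (fun w : ℝ => ∫ t : ℝ, cexp (w * t * I) • f t) (cocompact ℝ) (𝓝 0) := by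
  have hscale : Tendsto (fun w : ℝ => w * -(2 * Real.pi)⁻¹) (cocompact ℝ) (cocompact ℝ) :=
    tendsto_cocompact_mul_right₀ (by simp [Real.pi_ne_zero])
  refine ((Real.tendsto_integral_exp_smul_cocompact f).comp hscale).congr fun w => ?_
  refine integral_congr_ae (.of_forall fun t => ?_)
  simp only [Circle.smul_def, Real.fourierChar_apply]
  congr 2
  push_cast
  field_simp [Real.pi_ne_zero]

theorem tendsto_setIntegral_cexp_mul_I_smul_cocompact (f : ℝ → E) {s : Set ℝ}
    (hs : MeasurableSet s) :
    Tendsto (fun w : ℝ => ∫ t in s, cexp (w * t * I) • f t) (cocompact ℝ) (𝓝 0) := by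
  refine (Real.tendsto_integral_cexp_mul_I_smul_cocompact (s.indicator f)).congr fun w => ?_
  rw [← integral_indicator hs]
  exact integral_congr_ae (.of_forall fun t =>
    (Set.indicator_smul_apply s (fun t => cexp (w * t * I)) f t).symm)

theorem intervalIntegral.tendsto_integral_cexp_mul_I_smul_cocompact (f : ℝ → E) (a b : ℝ) :
    Tendsto (fun w : ℝ => ∫ t in a..b, cexp (w * t * I) • f t) (cocompact ℝ) (𝓝 0) := by
  simpa [intervalIntegral] using
    (tendsto_setIntegral_cexp_mul_I_smul_cocompact f measurableSet_Ioc).sub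
      (tendsto_setIntegral_cexp_mul_I_smul_cocompact f measurableSet_Ioc)

theorem kummer_riemann_lebesgue_general (κ : ℝ) (M : ℂ → ℂ)
    (hM : ∀ z : ℂ, M z = (Complex.Gamma κ)⁻¹ *
      ∫ t in (0:ℝ)..1, ((1 - t : ℝ) : ℂ) ^ ((κ : ℂ) - 1) * Complex.exp (z * t)) :
    ∀ x : ℝ, x ≠ 0 →
      Filter.Tendsto (fun lam : ℝ => M (Complex.I * lam * x)) Filter.atTop (nhds 0) := by
  intro x hx
  have hfreq : Tendsto (fun lam : ℝ => lam * x) atTop (cocompact ℝ) :=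
    (tendsto_cocompact_mul_right₀ hx).mono_left atTop_le_cocompact
  have hosc := (intervalIntegral.tendsto_integral_cexp_mul_I_smul_cocompact
    (fun t : ℝ => ((1 - t : ℝ) : ℂ) ^ ((κ : ℂ) - 1)) 0 1).comp hfreq
  rw [← mul_zero (Gamma κ)⁻¹]
  refine (hosc.const_mul _).congr fun lam => ?_
  rw [hM, Function.comp_apply]
  congr 1
  refine intervalIntegral.integral_congr fun t _ => ?_
  simp only [smul_eq_mul, ofReal_mul]
  ring_nf

theorem kummer_riemann_lebesgue (κ : ℝ) (hκ : 0 < κ) (M : ℂ → ℂ)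
    (hM : ∀ z : ℂ, M z = (Complex.Gamma κ)⁻¹ *
      ∫ t in (0:ℝ)..1, ((1 - t : ℝ) : ℂ) ^ ((κ : ℂ) - 1) * Complex.exp (z * t)) :
    ∀ x : ℝ, x ≠ 0 →
      Filter.Tendsto (fun lam : ℝ => M (Complex.I * lam * x)) Filter.atTop (nhds 0) :=
  kummer_riemann_lebesgue_general κ M hM
end

section
/- For κ > 0, the operator χ_κ : C^∞(ℝ) → C^∞(ℝ) is injective. -/
open MeasureTheory Set intervalIntegral Filter Topology Polynomial

/-- The one-variable intertwining operator `χ_κ`. -/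
noncomputable def chiKappa (κ : ℝ) (f : ℝ → ℂ) (x : ℝ) : ℂ :=
  (Real.Gamma κ)⁻¹ • ∫ t in (0:ℝ)..1, ((1 - t) ^ (κ - 1) : ℝ) • f (t * x)

noncomputable def chiA (μ : ℝ) (φ : ℝ → ℂ) (x : ℝ) : ℂ :=
  ∫ t in (0:ℝ)..1, ((1 - t) ^ (μ - 1) : ℝ) • φ (t * x)

lemma wInt {μ : ℝ} (hμ : 0 < μ) :
    IntervalIntegrable (fun t : ℝ => (1 - t) ^ (μ - 1)) volume (0:ℝ) 1 := by
  have h := intervalIntegral.intervalIntegrable_rpow' (a := (0:ℝ)) (b := 1) (r := μ - 1)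
    (by linarith)
  simpa using (h.comp_sub_left 1).symm

lemma wSmulInt {μ : ℝ} (hμ : 0 < μ) {g : ℝ → ℂ} (hg : Continuous g) :
    IntervalIntegrable (fun t : ℝ => ((1 - t) ^ (μ - 1) : ℝ) • g t) volume (0:ℝ) 1 := by
  have h1 : IntervalIntegrable (fun t : ℝ => (((1 - t) ^ (μ - 1) : ℝ) : ℂ)) volume (0:ℝ) 1 := by
    rw [intervalIntegrable_iff] at *
    exact ((wInt hμ).def').ofReal
  have := h1.mul_continuousOn (g := g) hg.continuousOn
  simpa [Complex.real_smul] using this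

lemma wMulInt {μ : ℝ} (hμ : 0 < μ) {g : ℝ → ℝ} (hg : Continuous g) :
    IntervalIntegrable (fun t : ℝ => ((1 - t) ^ (μ - 1) : ℝ) * g t) volume (0:ℝ) 1 :=
  (wInt hμ).mul_continuousOn hg.continuousOn

lemma contW {ν : ℝ} (hν : 1 ≤ ν) : Continuous (fun t : ℝ => (1 - t) ^ (ν - 1) : ℝ → ℝ) :=
  (continuous_const.sub continuous_id).rpow_const (fun _ => Or.inr (by linarith))

lemma hasDerivAt_chiA {ν : ℝ} (hν : 1 ≤ ν) {φ : ℝ → ℂ} (hφ : ContDiff ℝ (⊤ : ℕ∞) φ) (x₀ : ℝ) :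
    HasDerivAt (chiA ν φ)
      (∫ t in (0:ℝ)..1, ((1 - t) ^ (ν - 1) : ℝ) • (t • deriv φ (t * x₀))) x₀ := by
  have hφd : Differentiable ℝ φ := hφ.differentiable (by simp)
  have hφ' : Continuous (deriv φ) := hφ.continuous_deriv (by simp)
  obtain ⟨C, hC⟩ : ∃ C, ∀ y ∈ Icc (-(|x₀| + 1)) (|x₀| + 1), ‖deriv φ y‖ ≤ C :=
    isCompact_Icc.exists_bound_of_continuousOn hφ'.continuousOn
  have hcont : ∀ x : ℝ, Continuous (fun t : ℝ => ((1 - t) ^ (ν - 1) : ℝ) • φ (t * x)) :=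
    fun x => (contW hν).smul (hφ.continuous.comp (continuous_id.mul continuous_const))
  have hcont' : ∀ x : ℝ, Continuous (fun t : ℝ => ((1 - t) ^ (ν - 1) : ℝ) • (t • deriv φ (t * x))) :=
    fun x => (contW hν).smul (continuous_id.smul (hφ'.comp (continuous_id.mul continuous_const)))
  have key := intervalIntegral.hasDerivAt_integral_of_dominated_loc_of_deriv_le
    (F := fun x t => ((1 - t) ^ (ν - 1) : ℝ) • φ (t * x))
    (F' := fun x t => ((1 - t) ^ (ν - 1) : ℝ) • (t • deriv φ (t * x)))
    (x₀ := x₀) (a := 0) (b := 1) (μ := volume) (bound := fun _ => C)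
    (s := Metric.ball x₀ 1) (Metric.ball_mem_nhds x₀ one_pos)
    (Filter.Eventually.of_forall (fun x => (hcont x).aestronglyMeasurable.restrict))
    ((hcont x₀).intervalIntegrable _ _)
    (hcont' x₀).aestronglyMeasurable.restrict
    ?_ (intervalIntegrable_const) ?_
  · exact key.2
  · -- bound
    refine Filter.Eventually.of_forall (fun t ht x hx => ?_)
    rw [Set.uIoc_of_le (by norm_num : (0:ℝ) ≤ 1)] at ht
    have ht0 : 0 < t := ht.1
    have ht1 : t ≤ 1 := ht.2
    have hb : ‖deriv φ (t * x)‖ ≤ C := by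
      apply hC
      have hx' : |x| ≤ |x₀| + 1 := by
        have := abs_sub_abs_le_abs_sub x x₀
        have := mem_ball_iff_norm.mp hx
        simp only [Real.norm_eq_abs] at this
        linarith
      have : |t * x| ≤ |x₀| + 1 := by
        rw [abs_mul, abs_of_pos ht0]
        nlinarith [abs_nonneg x]
      exact mem_Icc.mpr (abs_le.mp this)
    calc ‖((1 - t) ^ (ν - 1) : ℝ) • (t • deriv φ (t * x))‖
        = (1 - t) ^ (ν - 1) * (t * ‖deriv φ (t * x)‖) := by
          rw [norm_smul, norm_smul, Real.norm_eq_abs, Real.norm_eq_abs,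
            abs_of_nonneg (Real.rpow_nonneg (by linarith) _), abs_of_pos ht0]
      _ ≤ 1 * (1 * C) := by
          apply mul_le_mul (Real.rpow_le_one (by linarith) (by linarith) (by linarith)) ?_ ?_ zero_le_one
          · exact mul_le_mul ht1 hb (norm_nonneg _) zero_le_one
          · positivity
      _ = C := by ring
  · -- differentiability
    refine Filter.Eventually.of_forall (fun t _ x _ => ?_)
    have hi : HasDerivAt (fun x : ℝ => t * x) t x := by
      simpa using (hasDerivAt_id x).const_mul t
    have h1 : HasDerivAt (fun x : ℝ => φ (t * x)) (t • deriv φ (t * x)) x :=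
      HasDerivAt.scomp (x := x) ((hφd (t * x)).hasDerivAt) hi
    exact h1.const_smul ((1 - t) ^ (ν - 1) : ℝ)

lemma wkey {μ : ℝ} (hμ : 0 < μ) (t : ℝ) :
    ((1 - t) ^ (μ - 1) : ℝ) * t = (1 - t) ^ (μ - 1) - (1 - t) ^ μ := by
  rcases eq_or_ne t 1 with h | h
  · simp [h, Real.zero_rpow hμ.ne']
  · have h1 : (1 : ℝ) - t ≠ 0 := sub_ne_zero.mpr (by simpa using h.symm)
    have : ((1 - t) : ℝ) ^ μ = (1 - t) ^ (μ - 1) * (1 - t) := by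
      rw [← Real.rpow_add_one h1 (μ - 1), sub_add_cancel]
    rw [this]; ring

lemma contMu {μ : ℝ} (hμ : 0 < μ) : Continuous (fun t : ℝ => (1 - t) ^ μ : ℝ → ℝ) :=
  (continuous_const.sub continuous_id).rpow_const (fun _ => Or.inr hμ.le)

lemma ibp {μ : ℝ} (hμ : 0 < μ) {φ : ℝ → ℂ} (hφ : ContDiff ℝ (⊤ : ℕ∞) φ) (x : ℝ) :
    x • (∫ t in (0:ℝ)..1, ((1 - t) ^ μ : ℝ) • (t • deriv φ (t * x)))
      = μ • chiA μ φ x - (μ + 1) • chiA (μ + 1) φ x := by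
  have hφd : Differentiable ℝ φ := hφ.differentiable (by simp)
  have hφ' : Continuous (deriv φ) := hφ.continuous_deriv (by simp)
  have hψ : Continuous (fun t : ℝ => φ (t * x)) :=
    hφ.continuous.comp (continuous_id.mul continuous_const)
  have hψ' : Continuous (fun t : ℝ => deriv φ (t * x)) :=
    hφ'.comp (continuous_id.mul continuous_const)
  set g1 : ℝ → ℂ := fun t => ((1 - t) ^ (μ - 1) : ℝ) • ((-μ * t : ℝ) • φ (t * x)) with hg1
  set g2 : ℝ → ℂ := fun t => ((1 - t) ^ μ : ℝ) • φ (t * x) with hg2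
  set g3 : ℝ → ℂ := fun t => ((1 - t) ^ μ * t : ℝ) • (x • deriv φ (t * x)) with hg3
  have hg1i : IntervalIntegrable g1 volume 0 1 :=
    wSmulInt hμ ((continuous_const.mul continuous_id).smul hψ)
  have hg2i : IntervalIntegrable g2 volume 0 1 :=
    ((contMu hμ).smul hψ).intervalIntegrable _ _
  have hg3i : IntervalIntegrable g3 volume 0 1 :=
    (((contMu hμ).mul continuous_id).smul (hψ'.const_smul x)).intervalIntegrable _ _
  -- FTC for Φ
  have hftc : (∫ t in (0:ℝ)..1, (g1 t + (g2 t + g3 t))) = 0 := by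
    have hΦc : ContinuousOn (fun t : ℝ => ((1 - t) ^ μ * t : ℝ) • φ (t * x)) (Icc 0 1) :=
      (((contMu hμ).mul continuous_id).smul hψ).continuousOn
    have hderiv : ∀ t ∈ Ioo (0:ℝ) 1,
        HasDerivWithinAt (fun t : ℝ => ((1 - t) ^ μ * t : ℝ) • φ (t * x))
          (g1 t + (g2 t + g3 t)) (Ioi t) t := by
      intro t ht
      have h1t : (1 : ℝ) - t ≠ 0 := sub_ne_zero.mpr (ne_of_gt (by linarith [ht.2]))
      have hru : HasDerivAt (fun t : ℝ => ((1 - t) ^ μ : ℝ)) ((μ * (1 - t) ^ (μ - 1)) * (-1)) t := by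
        have houter : HasDerivAt (fun y : ℝ => y ^ μ) (μ * (1 - t) ^ (μ - 1)) (1 - t) :=
          Real.hasDerivAt_rpow_const (Or.inl h1t)
        have hinner : HasDerivAt (fun t : ℝ => 1 - t) (-1) t := (hasDerivAt_id t).const_sub 1
        exact houter.comp t hinner
      have hu : HasDerivAt (fun t : ℝ => ((1 - t) ^ μ * t : ℝ))
          ((μ * (1 - t) ^ (μ - 1)) * (-1) * t + (1 - t) ^ μ * 1) t := hru.mul (hasDerivAt_id t)
      have hv : HasDerivAt (fun t : ℝ => φ (t * x)) (x • deriv φ (t * x)) t :=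
        HasDerivAt.scomp (x := t) ((hφd (t * x)).hasDerivAt) (hasDerivAt_mul_const x)
      have h := hu.smul hv
      refine (HasDerivAt.hasDerivWithinAt ?_)
      refine h.congr_deriv ?_
      simp only [hg1, hg2, hg3, Complex.real_smul, Complex.ofReal_mul, Complex.ofReal_neg,
        Complex.ofReal_one, Complex.ofReal_sub, smul_eq_mul, mul_one]
      push_cast
      ring
    have := intervalIntegral.integral_eq_sub_of_hasDeriv_right_of_le (by norm_num) hΦc hderiv
      (hg1i.add (hg2i.add hg3i))
    rw [this]
    norm_num [Real.zero_rpow hμ.ne']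
  rw [intervalIntegral.integral_add hg1i (hg2i.add hg3i),
    intervalIntegral.integral_add hg2i hg3i] at hftc
  -- identify the three integrals
  have e1 : (∫ t in (0:ℝ)..1, g1 t) = -(μ • chiA μ φ x) + μ • chiA (μ + 1) φ x := by
    have : ∀ t : ℝ, g1 t = (-μ) • (((1 - t) ^ (μ - 1) : ℝ) • φ (t * x))
        + μ • (((1 - t) ^ μ : ℝ) • φ (t * x)) := by
      intro t
      have := wkey hμ t
      simp only [hg1, Complex.real_smul, Complex.ofReal_mul, Complex.ofReal_neg, smul_eq_mul]
      rw [show ((((1 - t) ^ (μ - 1) : ℝ)) : ℂ) * (-(μ : ℂ) * t * φ (t * x))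
          = (-μ : ℂ) * ((((1 - t) ^ (μ - 1) * t : ℝ)) : ℂ) * φ (t * x) by push_cast; ring, this]
      push_cast
      ring
    have i1 : IntervalIntegrable (fun t : ℝ => (-μ : ℝ) • (((1 - t) ^ (μ - 1) : ℝ) • φ (t * x))) volume 0 1 :=
      (wSmulInt hμ hψ).smul (-μ)
    have i2 : IntervalIntegrable (fun t : ℝ => (μ : ℝ) • (((1 - t) ^ μ : ℝ) • φ (t * x))) volume 0 1 :=
      (((contMu hμ).smul hψ).intervalIntegrable _ _).smul μ
    rw [intervalIntegral.integral_congr (fun t _ => this t),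
      intervalIntegral.integral_add i1 i2,
      intervalIntegral.integral_smul, intervalIntegral.integral_smul]
    have hch : chiA (μ + 1) φ x = ∫ t in (0:ℝ)..1, ((1 - t) ^ μ : ℝ) • φ (t * x) := by
      simp [chiA]
    rw [chiA, ← hch]
    simp
  have e2 : (∫ t in (0:ℝ)..1, g2 t) = chiA (μ + 1) φ x := by
    simp [chiA, hg2]
  have e3 : (∫ t in (0:ℝ)..1, g3 t)
      = x • ∫ t in (0:ℝ)..1, ((1 - t) ^ μ : ℝ) • (t • deriv φ (t * x)) := by
    rw [← intervalIntegral.integral_smul]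
    refine intervalIntegral.integral_congr (fun t _ => ?_)
    simp only [hg3, Complex.real_smul, Complex.ofReal_mul, smul_eq_mul]
    ring
  rw [e1, e2, e3] at hftc
  simp only [Complex.real_smul, Complex.ofReal_add, Complex.ofReal_one] at hftc ⊢
  linear_combination hftc

lemma chiA_neg (ν : ℝ) (φ : ℝ → ℂ) (x : ℝ) :
    chiA ν (fun y => φ (-y)) x = chiA ν φ (-x) := by
  simp only [chiA, mul_neg, neg_mul]

lemma step_pos {μ : ℝ} (hμ : 0 < μ) {φ : ℝ → ℂ} (hφ : ContDiff ℝ (⊤ : ℕ∞) φ)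
    (h0 : ∀ x, chiA μ φ x = 0) {x : ℝ} (hx : 0 < x) : chiA (μ + 1) φ x = 0 := by
  set B := chiA (μ + 1) φ with hB
  set D : ℝ → ℂ := fun x => ∫ t in (0:ℝ)..1, ((1 - t) ^ μ : ℝ) • (t • deriv φ (t * x)) with hD
  have hd : ∀ y, HasDerivAt B (D y) y := by
    intro y
    have := hasDerivAt_chiA (ν := μ + 1) (by linarith) hφ y
    rw [hB, hD]
    simpa [add_sub_cancel_right] using this
  have hode : ∀ y : ℝ, y • D y = -((μ + 1) • B y) := by
    intro y
    rw [hD, ibp hμ hφ y, h0 y]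
    simp [hB]
  have hH : ∀ y : ℝ, 0 < y → HasDerivAt (fun z : ℝ => (z ^ (μ + 1) : ℝ) • B z) 0 y := by
    intro y hy
    have h1 : HasDerivAt (fun z : ℝ => (z ^ (μ + 1) : ℝ)) ((μ + 1) * y ^ μ) y := by
      have := Real.hasDerivAt_rpow_const (x := y) (p := μ + 1) (Or.inl (ne_of_gt hy))
      simpa [add_sub_cancel_right] using this
    have h2 := h1.smul (hd y)
    refine h2.congr_deriv ?_
    symm
    have e1 : (y : ℝ) ^ (μ + 1) = y ^ μ * y := Real.rpow_add_one (ne_of_gt hy) μ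
    rw [e1, mul_smul, hode y, smul_neg, smul_smul, mul_comm ((y:ℝ) ^ μ) (μ + 1), ← smul_smul]
    rw [smul_smul, mul_comm]
    abel
  have key : ∀ y : ℝ, 0 < y → y ≤ x → (x ^ (μ + 1) : ℝ) • B x = (y ^ (μ + 1) : ℝ) • B y := by
    intro y hy hyx
    have hint : ∀ z ∈ Set.uIcc y x, HasDerivAt (fun z : ℝ => (z ^ (μ + 1) : ℝ) • B z) 0 z := by
      intro z hz
      rw [Set.uIcc_of_le hyx] at hz
      exact hH z (lt_of_lt_of_le hy hz.1)
    have := intervalIntegral.integral_eq_sub_of_hasDerivAt hint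
      (intervalIntegrable_const (c := (0:ℂ)))
    simp only [intervalIntegral.integral_const, smul_zero] at this
    exact (sub_eq_zero.mp this.symm)
  have hBc : Continuous B := by
    rw [continuous_iff_continuousAt]; exact fun y => (hd y).continuousAt
  have hlim : Tendsto (fun y : ℝ => (y ^ (μ + 1) : ℝ) • B y) (nhdsWithin 0 (Set.Ioi 0)) (nhds 0) := by
    have h1 : Tendsto (fun y : ℝ => (y ^ (μ + 1) : ℝ)) (nhds 0) (nhds 0) := by
      have := (Real.continuousAt_rpow_const 0 (μ + 1) (Or.inr (by linarith))).tendsto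
      simpa [Real.zero_rpow (by linarith : μ + 1 ≠ 0)] using this
    have := (h1.smul (hBc.tendsto 0))
    simpa using this.mono_left nhdsWithin_le_nhds
  have hconst : Tendsto (fun _ : ℝ => (x ^ (μ + 1) : ℝ) • B x) (nhdsWithin 0 (Set.Ioi 0))
      (nhds ((x ^ (μ + 1) : ℝ) • B x)) := tendsto_const_nhds
  have heq : (fun y : ℝ => (y ^ (μ + 1) : ℝ) • B y) =ᶠ[nhdsWithin 0 (Set.Ioi 0)]
      (fun _ => (x ^ (μ + 1) : ℝ) • B x) := by
    filter_upwards [Ioc_mem_nhdsGT_of_mem (Set.mem_Ico.mpr ⟨le_refl 0, hx⟩)] with y hy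
    exact (key y hy.1 hy.2).symm
  have : (x ^ (μ + 1) : ℝ) • B x = 0 :=
    tendsto_nhds_unique (hconst.congr' heq.symm) hlim
  rcases smul_eq_zero.mp this with h | h
  · exact absurd h (ne_of_gt (Real.rpow_pos_of_pos hx _))
  · exact h

lemma step {μ : ℝ} (hμ : 0 < μ) {φ : ℝ → ℂ} (hφ : ContDiff ℝ (⊤ : ℕ∞) φ)
    (h0 : ∀ x, chiA μ φ x = 0) : ∀ x, chiA (μ + 1) φ x = 0 := by
  have hpos : ∀ x : ℝ, 0 < x → chiA (μ + 1) φ x = 0 := fun x hx => step_pos hμ hφ h0 hx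
  have hneg : ∀ x : ℝ, x < 0 → chiA (μ + 1) φ x = 0 := by
    intro x hx
    have hφn : ContDiff ℝ (⊤ : ℕ∞) (fun y => φ (-y)) := hφ.comp contDiff_neg
    have h0n : ∀ y, chiA μ (fun y => φ (-y)) y = 0 := fun y => (chiA_neg μ φ y).trans (h0 (-y))
    have := step_pos hμ hφn h0n (x := -x) (by linarith)
    rw [chiA_neg] at this
    simpa using this
  intro x
  rcases lt_trichotomy x 0 with h | h | h
  · exact hneg x h
  · -- x = 0 by continuity
    subst h
    have hBc : Continuous (chiA (μ + 1) φ) := by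
      rw [continuous_iff_continuousAt]
      exact fun y => (hasDerivAt_chiA (ν := μ + 1) (by linarith) hφ y).continuousAt
    have h1 : Tendsto (chiA (μ + 1) φ) (nhdsWithin 0 (Set.Ioi 0)) (nhds (chiA (μ + 1) φ 0)) :=
      (hBc.tendsto 0).mono_left nhdsWithin_le_nhds
    have h2 : Tendsto (chiA (μ + 1) φ) (nhdsWithin 0 (Set.Ioi 0)) (nhds 0) := by
      refine Tendsto.congr' ?_ (tendsto_const_nhds : Tendsto (fun _ : ℝ => (0:ℂ)) _ _)
      filter_upwards [self_mem_nhdsWithin] with y hy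
      exact (hpos y hy).symm
    exact tendsto_nhds_unique h1 h2
  · exact hpos x h

lemma hpow {κ : ℝ} {n : ℕ} (hκ : 0 < κ) : ∀ t ∈ Icc (0:ℝ) 1,
    ((1 - t) ^ (κ - 1) * (1 - t) ^ n : ℝ) = (1 - t) ^ (κ + n - 1) := by
  intro t ht
  rcases eq_or_ne t 1 with h | h
  · subst h
    rcases Nat.eq_zero_or_pos n with hn | hn
    · subst hn; norm_num
    · have h1 : ((0:ℝ)) ^ (n:ℕ) = 0 := zero_pow (by omega)
      have h2 : ((0:ℝ)) ^ (κ + n - 1) = 0 := Real.zero_rpow (by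
        have : (1:ℝ) ≤ n := by exact_mod_cast hn
        exact ne_of_gt (by linarith))
      simp [h1, h2]
  · have hb : 0 < 1 - t := by
      rcases lt_or_eq_of_le ht.2 with h' | h'
      · linarith
      · exact absurd h' h
    rw [← Real.rpow_natCast (1 - t) n, ← Real.rpow_add hb]
    ring_nf

lemma moment {κ : ℝ} {φ : ℝ → ℂ} (hκ : 0 < κ) (hφ : Continuous φ)
    (h : ∀ n : ℕ, (∫ t in (0:ℝ)..1, ((1 - t) ^ (κ + n - 1) : ℝ) • φ t) = 0) :
    φ (1/2) = 0 := by
  -- Step 1: all polynomial moments vanish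
  have M1 : ∀ p : ℝ[X],
      (∫ t in (0:ℝ)..1, ((1 - t) ^ (κ - 1) * p.eval (1 - t) : ℝ) • φ t) = 0 := by
    intro p
    induction p using Polynomial.induction_on' with
    | add p q hp hq =>
      have ip : IntervalIntegrable
          (fun t : ℝ => ((1 - t) ^ (κ - 1) * p.eval (1 - t) : ℝ) • φ t) volume 0 1 := by
        have := wSmulInt hκ (g := fun t => (p.eval (1 - t) : ℝ) • φ t)
          ((p.continuous_aeval.comp (continuous_const.sub continuous_id)).smul hφ)
        simpa only [smul_smul] using this
      have iq : IntervalIntegrable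
          (fun t : ℝ => ((1 - t) ^ (κ - 1) * q.eval (1 - t) : ℝ) • φ t) volume 0 1 := by
        have := wSmulInt hκ (g := fun t => (q.eval (1 - t) : ℝ) • φ t)
          ((q.continuous_aeval.comp (continuous_const.sub continuous_id)).smul hφ)
        simpa only [smul_smul] using this
      have : (fun t : ℝ => ((1 - t) ^ (κ - 1) * (p + q).eval (1 - t) : ℝ) • φ t)
          = fun t : ℝ => ((1 - t) ^ (κ - 1) * p.eval (1 - t) : ℝ) • φ t
            + ((1 - t) ^ (κ - 1) * q.eval (1 - t) : ℝ) • φ t := by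
        funext t
        rw [Polynomial.eval_add, mul_add, add_smul]
      rw [this, intervalIntegral.integral_add ip iq, hp, hq, add_zero]
    | monomial n a =>
      have : EqOn (fun t : ℝ => ((1 - t) ^ (κ - 1) * (monomial n a).eval (1 - t) : ℝ) • φ t)
          (fun t : ℝ => a • (((1 - t) ^ (κ + n - 1) : ℝ) • φ t)) (uIcc (0:ℝ) 1) := by
        intro t ht
        rw [uIcc_of_le (by norm_num : (0:ℝ) ≤ 1)] at ht
        simp only [Polynomial.eval_monomial]
        rw [show ((1 - t) ^ (κ - 1) * (a * (1 - t) ^ n) : ℝ)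
            = a * ((1 - t) ^ (κ - 1) * (1 - t) ^ n) by ring, hpow hκ t ht, mul_smul]
      rw [intervalIntegral.integral_congr this, intervalIntegral.integral_smul, h n, smul_zero]
  -- Step 1': moments in t
  have M1' : ∀ P : ℝ[X],
      (∫ t in (0:ℝ)..1, ((1 - t) ^ (κ - 1) * P.eval t : ℝ) • φ t) = 0 := by
    intro P
    have := M1 (P.comp (1 - Polynomial.X))
    have he : ∀ t : ℝ, (P.comp (1 - Polynomial.X)).eval (1 - t) = P.eval t := by
      intro t
      rw [Polynomial.eval_comp]
      norm_num
    simp_rw [he] at this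
    exact this
  -- Step 2: S = 0
  set w : ℝ → ℝ := fun t => (1 - t) ^ (κ - 1) with hw
  have hwnn : ∀ t ∈ Icc (0:ℝ) 1, 0 ≤ w t := fun t ht =>
    Real.rpow_nonneg (by linarith [ht.2]) _
  set W : ℝ := ∫ t in (0:ℝ)..1, w t with hW
  have hWnn : 0 ≤ W := intervalIntegral.integral_nonneg (by norm_num) hwnn
  obtain ⟨M, hM⟩ : ∃ M, ∀ t ∈ Icc (0:ℝ) 1, ‖φ t‖ ≤ M :=
    isCompact_Icc.exists_bound_of_continuousOn hφ.continuousOn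
  have hMnn : 0 ≤ M := le_trans (norm_nonneg _) (hM 0 (by norm_num))
  set S : ℂ := ∫ t in (0:ℝ)..1, (w t : ℝ) • ((starRingEnd ℂ) (φ t) * φ t) with hS
  have hSbound : ∀ ε : ℝ, 0 < ε → ‖S‖ ≤ W * (2 * ε * M) := by
    intro ε hε
    obtain ⟨P, hP⟩ := exists_polynomial_near_of_continuousOn 0 1 (fun t => (φ t).re)
      (Complex.continuous_re.comp hφ).continuousOn ε hε
    obtain ⟨Q, hQ⟩ := exists_polynomial_near_of_continuousOn 0 1 (fun t => (φ t).im)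
      (Complex.continuous_im.comp hφ).continuousOn ε hε
    set c : ℝ → ℂ := fun t => (starRingEnd ℂ) (φ t) - ((P.eval t : ℝ) : ℂ)
      + Complex.I * ((Q.eval t : ℝ) : ℂ) with hc
    have hcb : ∀ t ∈ Icc (0:ℝ) 1, ‖c t‖ ≤ 2 * ε := by
      intro t ht
      have : c t = (((φ t).re - P.eval t : ℝ) : ℂ) - Complex.I * (((φ t).im - Q.eval t : ℝ) : ℂ) := by
        rw [hc]
        simp only [Complex.ext_iff, Complex.sub_re, Complex.add_re, Complex.conj_re,
          Complex.ofReal_re, Complex.mul_re, Complex.I_re, Complex.I_im, Complex.ofReal_im,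
          Complex.sub_im, Complex.add_im, Complex.conj_im, Complex.mul_im]
        constructor <;> ring
      rw [this]
      calc ‖(((φ t).re - P.eval t : ℝ) : ℂ) - Complex.I * (((φ t).im - Q.eval t : ℝ) : ℂ)‖
          ≤ ‖(((φ t).re - P.eval t : ℝ) : ℂ)‖ + ‖Complex.I * (((φ t).im - Q.eval t : ℝ) : ℂ)‖ :=
            norm_sub_le _ _
        _ ≤ ε + ε := by
            rw [norm_mul, Complex.norm_I, one_mul, Complex.norm_real, Complex.norm_real]
            rw [Real.norm_eq_abs, Real.norm_eq_abs]
            have h1 : |(φ t).re - P.eval t| < ε := by rw [abs_sub_comm]; exact hP t ht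
            have h2 : |(φ t).im - Q.eval t| < ε := by rw [abs_sub_comm]; exact hQ t ht
            have := abs_nonneg ((φ t).re - P.eval t)
            gcongr
        _ = 2 * ε := by ring
    have i0 : IntervalIntegrable (fun t : ℝ => (w t : ℝ) • ((starRingEnd ℂ) (φ t) * φ t))
        volume 0 1 := wSmulInt hκ ((Complex.continuous_conj.comp hφ).mul hφ)
    have i1 : IntervalIntegrable (fun t : ℝ => ((w t * P.eval t : ℝ)) • φ t) volume 0 1 := by
      have := wSmulInt hκ (g := fun t => (P.eval t : ℝ) • φ t) (P.continuous_aeval.smul hφ)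
      simpa only [smul_smul] using this
    have i2b : IntervalIntegrable (fun t : ℝ => ((w t * Q.eval t : ℝ)) • φ t) volume 0 1 := by
      have := wSmulInt hκ (g := fun t => (Q.eval t : ℝ) • φ t) (Q.continuous_aeval.smul hφ)
      simpa only [smul_smul] using this
    have i2 : IntervalIntegrable (fun t : ℝ => Complex.I • (((w t * Q.eval t : ℝ)) • φ t))
        volume 0 1 := by
      have := i2b.smul Complex.I
      exact this
    have split : (∫ t in (0:ℝ)..1, (w t : ℝ) • (c t * φ t))
        = S - (∫ t in (0:ℝ)..1, ((w t * P.eval t : ℝ)) • φ t)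
          + Complex.I • (∫ t in (0:ℝ)..1, ((w t * Q.eval t : ℝ)) • φ t) := by
      rw [← intervalIntegral.integral_smul, hS, ← intervalIntegral.integral_sub i0 i1,
        ← intervalIntegral.integral_add (i0.sub i1) i2]
      refine intervalIntegral.integral_congr (fun t _ => ?_)
      simp only [hc, Complex.real_smul, Complex.ofReal_mul, smul_eq_mul]
      ring
    rw [M1' P, M1' Q, sub_zero, smul_zero, add_zero] at split
    rw [← split]
    have hb : ∀ᵐ t ∂(volume.restrict (Set.uIoc (0:ℝ) 1)),
        ‖(w t : ℝ) • (c t * φ t)‖ ≤ w t * (2 * ε * M) := by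
      refine (ae_restrict_mem measurableSet_uIoc).mono (fun t ht => ?_)
      rw [Set.uIoc_of_le (by norm_num : (0:ℝ) ≤ 1)] at ht
      have ht' : t ∈ Icc (0:ℝ) 1 := ⟨le_of_lt ht.1, ht.2⟩
      rw [norm_smul, Real.norm_eq_abs, abs_of_nonneg (hwnn t ht'), norm_mul]
      apply mul_le_mul_of_nonneg_left _ (hwnn t ht')
      calc ‖c t‖ * ‖φ t‖ ≤ (2 * ε) * M :=
          mul_le_mul (hcb t ht') (hM t ht') (norm_nonneg _) (by linarith)
        _ = 2 * ε * M := by ring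
    calc ‖∫ t in (0:ℝ)..1, (w t : ℝ) • (c t * φ t)‖
        ≤ |∫ t in (0:ℝ)..1, w t * (2 * ε * M)| :=
          intervalIntegral.norm_integral_le_abs_of_norm_le hb
            ((wInt hκ).mul_continuousOn continuousOn_const)
      _ = ∫ t in (0:ℝ)..1, w t * (2 * ε * M) := abs_of_nonneg (intervalIntegral.integral_nonneg
            (by norm_num) (fun t ht => mul_nonneg (hwnn t ht) (by positivity)))
      _ = W * (2 * ε * M) := by rw [intervalIntegral.integral_mul_const, hW]
  -- S = 0
  have hSz : S = 0 := by
    by_contra hne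
    have hpos : 0 < ‖S‖ := norm_pos_iff.mpr hne
    have hK : 0 < 2 * M * W + 1 := by nlinarith
    have hε : 0 < ‖S‖ / (2 * (2 * M * W + 1)) := by positivity
    have hb1 := hSbound _ hε
    have e : W * (2 * (‖S‖ / (2 * (2 * M * W + 1))) * M) = W * ‖S‖ * M / (2 * M * W + 1) := by
      field_simp
    rw [e, le_div_iff₀ hK] at hb1
    nlinarith [mul_nonneg (mul_nonneg hMnn hWnn) hpos.le]
  -- real integral R
  set R : ℝ := ∫ t in (0:ℝ)..1, w t * ‖φ t‖ ^ 2 with hR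
  have hRz : R = 0 := by
    have : S = ((R : ℝ) : ℂ) := by
      rw [hS, hR, ← intervalIntegral.integral_ofReal]
      refine intervalIntegral.integral_congr (fun t _ => ?_)
      rw [mul_comm ((starRingEnd ℂ) (φ t)) (φ t), Complex.mul_conj]
      rw [Complex.real_smul]
      push_cast
      rw [Complex.normSq_eq_norm_sq]
      norm_num
    rw [this] at hSz
    exact_mod_cast hSz
  -- positivity argument
  by_contra hne
  have hc0 : 0 < ‖φ (1/2)‖ ^ 2 := pow_pos (norm_pos_iff.mpr hne) 2
  set n2 : ℝ → ℝ := fun t => ‖φ t‖ ^ 2 with hn2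
  have hn2c : Continuous n2 := (hφ.norm).pow 2
  have hU : IsOpen {t : ℝ | ‖φ (1/2)‖ ^ 2 / 2 < n2 t} := isOpen_lt continuous_const hn2c
  obtain ⟨δ, hδpos, hδ⟩ := Metric.isOpen_iff.mp hU (1/2) (by
    simp only [Set.mem_setOf_eq, hn2]; linarith)
  set δ' : ℝ := min δ (1/2) with hδ'
  have hδ'pos : 0 < δ' := lt_min hδpos (by norm_num)
  have hδ'le : δ' ≤ 1/2 := min_le_right _ _
  have hδ'δ : δ' ≤ δ := min_le_left _ _
  clear_value δ'
  set a : ℝ := 1/2 - δ'/2 with ha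
  set b : ℝ := 1/2 + δ'/2 with hb2
  clear_value a b
  have hab : a < b := by rw [ha, hb2]; linarith
  have ha0 : 0 ≤ a := by rw [ha]; linarith
  have hb1 : b ≤ 3/4 + 0 := by rw [hb2]; linarith
  have hball : Ioo a b ⊆ Metric.ball (1/2 : ℝ) δ := by
    intro t ht
    rw [Metric.mem_ball, Real.dist_eq]
    rw [ha, hb2] at ht
    rw [abs_lt]
    constructor <;> [linarith [ht.1]; linarith [ht.2]]
  set ψ : ℝ → ℝ := fun t => w t * n2 t with hψ
  have hψint : IntervalIntegrable ψ volume 0 1 := (wInt hκ).mul_continuousOn hn2c.continuousOn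
  have hψnn : ∀ t ∈ Icc (0:ℝ) 1, 0 ≤ ψ t := fun t ht =>
    mul_nonneg (hwnn t ht) (by positivity)
  have hsub : ∀ c d : ℝ, c ∈ Icc (0:ℝ) 1 → d ∈ Icc (0:ℝ) 1 →
      IntervalIntegrable ψ volume c d := by
    intro c d hcm hdm
    refine hψint.mono_set ?_
    exact Set.uIcc_subset_uIcc
      (by rw [Set.uIcc_of_le (by norm_num : (0:ℝ) ≤ 1)]; exact hcm)
      (by rw [Set.uIcc_of_le (by norm_num : (0:ℝ) ≤ 1)]; exact hdm)
  have hmid : 0 < ∫ t in a..b, ψ t := by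
    refine intervalIntegral.intervalIntegral_pos_of_pos_on
      (hsub a b ⟨ha0, by linarith⟩ ⟨by linarith, by linarith⟩) (fun t ht => ?_) hab
    have htb : t ∈ Metric.ball (1/2:ℝ) δ := hball ht
    have h1 : ‖φ (1/2)‖^2/2 < n2 t := hδ htb
    have hwpos : 0 < w t := Real.rpow_pos_of_pos (by
      have : t < b := ht.2
      linarith) _
    exact mul_pos hwpos (by linarith)
  have hsplit : R = (∫ t in (0:ℝ)..a, ψ t) + (∫ t in a..b, ψ t) + (∫ t in b..(1:ℝ), ψ t) := by
    rw [hR]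
    rw [← intervalIntegral.integral_add_adjacent_intervals (hsub 0 b ⟨le_refl 0, by norm_num⟩ ⟨by linarith, by linarith⟩) (hsub b 1 ⟨by linarith, by linarith⟩ ⟨by norm_num, le_refl 1⟩),
      ← intervalIntegral.integral_add_adjacent_intervals (hsub 0 a ⟨le_refl 0, by norm_num⟩ ⟨ha0, by linarith⟩) (hsub a b ⟨ha0, by linarith⟩ ⟨by linarith, by linarith⟩)]
  have h0a : 0 ≤ ∫ t in (0:ℝ)..a, ψ t :=
    intervalIntegral.integral_nonneg ha0 (fun u hu => hψnn u ⟨hu.1, by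
      have := hu.2; linarith⟩)
  have hb1' : 0 ≤ ∫ t in b..(1:ℝ), ψ t :=
    intervalIntegral.integral_nonneg (by linarith) (fun u hu => hψnn u ⟨by linarith [hu.1], hu.2⟩)
  rw [hRz] at hsplit
  linarith


lemma iter {κ : ℝ} (hκ : 0 < κ) {φ : ℝ → ℂ} (hφ : ContDiff ℝ (⊤ : ℕ∞) φ)
    (h0 : ∀ x, chiA κ φ x = 0) : ∀ n : ℕ, ∀ x, chiA (κ + n) φ x = 0 := by
  intro n
  induction n with
  | zero => simpa using h0
  | succ n ih =>
    have := step (μ := κ + n) (by positivity) hφ ih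
    intro x
    have h2 := this x
    have e : κ + (n : ℝ) + 1 = κ + ((n : ℕ) + 1 : ℕ) := by push_cast; ring
    rwa [e] at h2

theorem chiKappa_injective' (κ : ℝ) (hκ : 0 < κ) :
    ∀ f g : ℝ → ℂ, ContDiff ℝ (⊤ : ℕ∞) f → ContDiff ℝ (⊤ : ℕ∞) g →
      (∀ x : ℝ, (Real.Gamma κ)⁻¹ • chiA κ f x = (Real.Gamma κ)⁻¹ • chiA κ g x) → f = g := by
  intro f g hf hg hEq
  have hΓ : (Real.Gamma κ)⁻¹ ≠ 0 := inv_ne_zero (ne_of_gt (Real.Gamma_pos_of_pos hκ))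
  have hfg : ∀ x, chiA κ f x = chiA κ g x := fun x => smul_right_injective ℂ hΓ (hEq x)
  set φ : ℝ → ℂ := fun y => f y - g y with hφdef
  have hφ : ContDiff ℝ (⊤ : ℕ∞) φ := hf.sub hg
  have h0 : ∀ x, chiA κ φ x = 0 := by
    intro x
    have hif : IntervalIntegrable (fun t : ℝ => ((1 - t) ^ (κ - 1) : ℝ) • f (t * x)) volume 0 1 :=
      wSmulInt hκ (hf.continuous.comp (continuous_id.mul continuous_const))
    have hig : IntervalIntegrable (fun t : ℝ => ((1 - t) ^ (κ - 1) : ℝ) • g (t * x)) volume 0 1 :=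
      wSmulInt hκ (hg.continuous.comp (continuous_id.mul continuous_const))
    have : chiA κ φ x = chiA κ f x - chiA κ g x := by
      rw [chiA, chiA, chiA, ← intervalIntegral.integral_sub hif hig]
      refine intervalIntegral.integral_congr (fun t _ => ?_)
      simp [hφdef, smul_sub]
    rw [this, hfg x, sub_self]
  have hiter := iter hκ hφ h0
  funext y
  have hmom := moment (κ := κ) (φ := fun t => φ (t * (2 * y))) hκ
    (hφ.continuous.comp (continuous_id.mul continuous_const)) (fun n => hiter n (2 * y))
  have : φ ((1/2 : ℝ) * (2 * y)) = 0 := hmom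
  rw [show (1/2 : ℝ) * (2 * y) = y by ring] at this
  exact sub_eq_zero.mp this

theorem chiKappa_injective (κ : ℝ) (hκ : 0 < κ) :
    ∀ f g : ℝ → ℂ, ContDiff ℝ (⊤ : ℕ∞) f → ContDiff ℝ (⊤ : ℕ∞) g →
      (∀ x : ℝ, chiKappa κ f x = chiKappa κ g x) → f = g := by
  intro f g hf hg hEq
  exact chiKappa_injective' κ hκ f g hf hg (fun x => hEq x)
end

section
/- For κ > 0, f ∈ C^∞(ℝ) and g ∈ 𝒟(ℝ) (smooth with compact support), the duality relation ∫_ℝ (χ_κ f)(x) g(x) dx = ∫_ℝ f(x) (ᵗχ_κ g)(x) dx holds, where (ᵗχ_κ g)(x) = (1/Γ(κ)) ∫_{|x|}^∞ (t-|x|)^{κ-1} t^{-κ} g(sgn(x)t) dt for x ≠ 0. -/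
open MeasureTheory Set Real Filter Function

/-- The dual intertwining operator `ᵗχ_κ`. -/
noncomputable def tchiKappa (κ : ℝ) (g : ℝ → ℂ) (x : ℝ) : ℂ :=
  (Real.Gamma κ)⁻¹ •
    ∫ t in Set.Ioi |x|, ((t - |x|) ^ (κ - 1) * t ^ (-κ) : ℝ) • g (Real.sign x * t)

lemma scalar_calc {κ A t : ℝ} (hA : 0 < A) (ht : 0 < t) (ht1 : t < 1) :
    |A * (-(t ^ 2)⁻¹)| * ((A * t⁻¹ - A) ^ (κ - 1) * (A * t⁻¹) ^ (-κ))
      = (1 - t) ^ (κ - 1) * t⁻¹ := by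
  have h1t : (0:ℝ) < 1 - t := by linarith
  have hAt : (0:ℝ) < A * t⁻¹ := by positivity
  have e1 : A * t⁻¹ - A = (A * t⁻¹) * (1 - t) := by field_simp
  rw [e1, Real.mul_rpow hAt.le h1t.le,
    show (A * t⁻¹) ^ (κ - 1) * (1 - t) ^ (κ - 1) * (A * t⁻¹) ^ (-κ)
      = ((A * t⁻¹) ^ (κ - 1) * (A * t⁻¹) ^ (-κ)) * (1 - t) ^ (κ - 1) by ring,
    ← Real.rpow_add hAt, show κ - 1 + -κ = -1 by ring, Real.rpow_neg_one,
    abs_of_nonpos (by rw [mul_neg]; exact neg_nonpos.2 (by positivity))]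
  field_simp

/-- Change of variables `t = |x| / s` turning the dual integral into a `(0,1)` integral. -/
lemma tchi_integral_eq (κ : ℝ) (g : ℝ → ℂ) {x : ℝ} (hx : x ≠ 0) :
    (∫ t in Set.Ioi |x|, ((t - |x|) ^ (κ - 1) * t ^ (-κ) : ℝ) • g (Real.sign x * t))
      = ∫ t in Set.Ioo (0:ℝ) 1, (((1 - t) ^ (κ - 1) * t⁻¹ : ℝ)) • g (x / t) := by
  have hA : 0 < |x| := abs_pos.2 hx
  have himg : (fun t : ℝ => |x| * t⁻¹) '' Set.Ioo 0 1 = Set.Ioi |x| := by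
    ext y
    simp only [mem_image, mem_Ioo, mem_Ioi]
    constructor
    · rintro ⟨t, ⟨ht0, ht1⟩, rfl⟩
      have h1 : 1 < t⁻¹ := (one_lt_inv₀ ht0).2 ht1
      calc |x| = |x| * 1 := (mul_one _).symm
        _ < |x| * t⁻¹ := by exact (mul_lt_mul_iff_right₀ hA).2 h1
    · intro hy
      have hy0 : 0 < y := lt_trans hA hy
      refine ⟨|x| / y, ⟨by positivity, (div_lt_one hy0).2 hy⟩, ?_⟩
      field_simp
  have hinj : Set.InjOn (fun t : ℝ => |x| * t⁻¹) (Set.Ioo 0 1) := by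
    intro a _ b _ h
    have : a⁻¹ = b⁻¹ := mul_left_cancel₀ hA.ne' h
    exact inv_injective this
  have hderiv : ∀ t ∈ Set.Ioo (0:ℝ) 1,
      HasDerivWithinAt (fun t : ℝ => |x| * t⁻¹) (|x| * (-(t ^ 2)⁻¹)) (Set.Ioo 0 1) t :=
    fun t ht => ((hasDerivAt_inv ht.1.ne').const_mul |x|).hasDerivWithinAt
  rw [← himg, integral_image_eq_integral_abs_deriv_smul measurableSet_Ioo hderiv hinj]
  refine setIntegral_congr_fun measurableSet_Ioo (fun t ht => ?_)
  simp only [smul_smul]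
  have hs : Real.sign x * |x| = x := by
    rcases hx.lt_or_gt with h | h
    · rw [Real.sign_of_neg h, abs_of_neg h]; ring
    · rw [Real.sign_of_pos h, abs_of_pos h]; ring
  have harg : Real.sign x * (|x| * t⁻¹) = x / t := by
    rw [← mul_assoc, hs, div_eq_mul_inv]
  rw [harg, scalar_calc hA ht.1 ht.2]


lemma integrableOn_one_sub_rpow {κ : ℝ} (hκ : 0 < κ) :
    IntegrableOn (fun t : ℝ => (1 - t) ^ (κ - 1)) (Set.Ioo (0:ℝ) 1) := by
  have h := (intervalIntegral.intervalIntegrable_rpow'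
    (show (-1:ℝ) < κ - 1 by linarith) (a := 0) (b := 1)).comp_sub_left 1
  rw [intervalIntegrable_iff] at h
  refine h.mono_set ?_
  intro x hx
  rw [Set.mem_uIoc]
  right
  exact ⟨by linarith [hx.1], by linarith [hx.2]⟩

theorem chiKappa_duality (κ : ℝ) (hκ : 0 < κ) (f g : ℝ → ℂ)
    (hf : ContDiff ℝ (⊤ : ℕ∞) f) (hg : ContDiff ℝ (⊤ : ℕ∞) g) (hgc : HasCompactSupport g) :
    ∫ x : ℝ, chiKappa κ f x * g x = ∫ x : ℝ, f x * tchiKappa κ g x := by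
  have hfc : Continuous f := hf.continuous
  have hgcont : Continuous g := hg.continuous
  obtain ⟨R, hR0, hsupp⟩ : ∃ R : ℝ, 0 < R ∧ tsupport g ⊆ Icc (-R) R := by
    obtain ⟨R, hR0, hR⟩ := hgc.isCompact.isBounded.subset_closedBall_lt 0 0
    refine ⟨R, hR0, ?_⟩
    simpa [Real.closedBall_eq_Icc] using hR
  obtain ⟨Cf, hCf⟩ := (isCompact_Icc : IsCompact (Icc (-R) R)).exists_bound_of_continuousOn
    hfc.continuousOn
  obtain ⟨Cg, hCg⟩ := hgcont.bounded_above_of_compact_support hgc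
  set C : ℝ := max Cf 0 * max Cg 0 with hCdef
  have hC0 : 0 ≤ C := mul_nonneg (le_max_right _ _) (le_max_right _ _)
  have hgz : ∀ x : ℝ, x ∉ Icc (-R) R → g x = 0 := fun x hx =>
    image_eq_zero_of_notMem_tsupport (fun h => hx (hsupp h))
  have hbound : ∀ t ∈ Icc (0:ℝ) 1, ∀ x : ℝ,
      ‖f (t * x) * g x‖ ≤ (Icc (-R) R).indicator (fun _ => C) x := by
    intro t ht x
    by_cases hx : x ∈ Icc (-R) R
    · rw [indicator_of_mem hx]
      have htx : t * x ∈ Icc (-R) R := by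
        rw [mem_Icc, ← abs_le] at hx ⊢
        calc |t * x| = |t| * |x| := abs_mul _ _
          _ ≤ 1 * |x| := by
              gcongr
              rw [abs_of_nonneg ht.1]; exact ht.2
          _ = |x| := one_mul _
          _ ≤ R := hx
      rw [norm_mul]
      exact mul_le_mul (le_trans (hCf _ htx) (le_max_left _ _))
        (le_trans (hCg x) (le_max_left _ _)) (norm_nonneg _) (le_max_right _ _)
    · rw [indicator_of_notMem hx, hgz x hx, mul_zero, norm_zero]
  set μ : Measure ℝ := volume.restrict (Ioo (0:ℝ) 1) with hμ
  have hI1 : IntegrableOn (fun t : ℝ => (1 - t) ^ (κ - 1)) (Ioo (0:ℝ) 1) :=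
    integrableOn_one_sub_rpow hκ
  have hind : Integrable ((Icc (-R) R).indicator (fun _ => C)) volume :=
    (integrable_indicator_iff measurableSet_Icc).2
      (integrableOn_const measure_Icc_lt_top.ne)
  have hrpm : Measurable (fun t : ℝ => (1 - t) ^ (κ - 1)) :=
    (measurable_const.sub measurable_id).pow_const _
  have hae1 : ∀ᵐ p : ℝ × ℝ ∂(μ.prod volume), p.1 ∈ Ioo (0:ℝ) 1 := by
    rw [ae_iff]
    have hset : {p : ℝ × ℝ | ¬ p.1 ∈ Ioo (0:ℝ) 1} = (Ioo (0:ℝ) 1)ᶜ ×ˢ (univ : Set ℝ) := by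
      ext p; simp
    rw [hset, Measure.prod_prod, hμ, Measure.restrict_apply measurableSet_Ioo.compl]
    simp
  have hmeas1 : AEStronglyMeasurable
      (fun p : ℝ × ℝ => ((1 - p.1) ^ (κ - 1) : ℝ) • (f (p.1 * p.2) * g p.2))
      (μ.prod volume) := by
    refine AEStronglyMeasurable.smul (f := fun p : ℝ × ℝ => ((1 - p.1) ^ (κ - 1) : ℝ))
      (g := fun p : ℝ × ℝ => f (p.1 * p.2) * g p.2) ?_ ?_
    · exact (hrpm.comp measurable_fst).aestronglyMeasurable
    · exact ((hfc.comp (continuous_fst.mul continuous_snd)).mul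
        (hgcont.comp continuous_snd)).aestronglyMeasurable
  have hP1 : Integrable
      (fun p : ℝ × ℝ => ((1 - p.1) ^ (κ - 1) : ℝ) • (f (p.1 * p.2) * g p.2))
      (μ.prod volume) := by
    have hdom : Integrable
        (fun p : ℝ × ℝ => (1 - p.1) ^ (κ - 1) * (Icc (-R) R).indicator (fun _ => C) p.2)
        (μ.prod volume) := hI1.mul_prod hind
    refine hdom.mono' hmeas1 ?_
    filter_upwards [hae1] with p hp
    rw [norm_smul, Real.norm_eq_abs,
      abs_of_nonneg (Real.rpow_nonneg (by linarith [hp.2] : (0:ℝ) ≤ 1 - p.1) _)]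
    exact mul_le_mul_of_nonneg_left (hbound p.1 ⟨hp.1.le, hp.2.le⟩ p.2)
      (Real.rpow_nonneg (by linarith [hp.2]) _)
  have hsub : ∀ t ∈ Ioo (0:ℝ) 1,
      (∫ x : ℝ, ((1 - t) ^ (κ - 1) : ℝ) • (f (t * x) * g x))
        = ∫ x : ℝ, ((1 - t) ^ (κ - 1) * t⁻¹ : ℝ) • (f x * g (x / t)) := by
    intro t ht
    have ht0 : (0:ℝ) < t := ht.1
    have key : (∫ x : ℝ, f x * g (x / t)) = |t| • ∫ y : ℝ, f (t * y) * g y := by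
      have h := MeasureTheory.Measure.integral_comp_div (fun y => f (t * y) * g y) t
      have e : ∀ x : ℝ, t * (x / t) = x := fun x => by field_simp
      simpa only [e] using h
    rw [integral_smul, integral_smul, key, smul_smul]
    congr 1
    rw [abs_of_pos ht0]
    field_simp
  have hmeas2 : AEStronglyMeasurable
      (fun p : ℝ × ℝ => ((1 - p.1) ^ (κ - 1) * p.1⁻¹ : ℝ) • (f p.2 * g (p.2 / p.1)))
      (μ.prod volume) := by
    refine AEStronglyMeasurable.smul (f := fun p : ℝ × ℝ => ((1 - p.1) ^ (κ - 1) * p.1⁻¹ : ℝ))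
      (g := fun p : ℝ × ℝ => f p.2 * g (p.2 / p.1)) ?_ ?_
    · exact ((hrpm.comp measurable_fst).mul measurable_fst.inv).aestronglyMeasurable
    · exact ((hfc.measurable.comp measurable_snd).mul
        (hgcont.measurable.comp (measurable_snd.div measurable_fst))).aestronglyMeasurable
  have hP2 : Integrable
      (fun p : ℝ × ℝ => ((1 - p.1) ^ (κ - 1) * p.1⁻¹ : ℝ) • (f p.2 * g (p.2 / p.1)))
      (μ.prod volume) := by
    rw [integrable_prod_iff hmeas2]
    constructor
    · filter_upwards [ae_restrict_mem measurableSet_Ioo] with t ht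
      refine Integrable.smul (f := fun y : ℝ => f y * g (y / t)) ((1 - t) ^ (κ - 1) * t⁻¹ : ℝ) ?_
      have hcs : HasCompactSupport (fun x : ℝ => g (x / t)) := by
        have := hgc.comp_homeomorph (Homeomorph.mulRight₀ t⁻¹ (inv_ne_zero ht.1.ne'))
        simpa [Function.comp_def, div_eq_mul_inv] using this
      have hcs2 : HasCompactSupport (fun x : ℝ => f x * g (x / t)) := hcs.mul_left
      exact (hfc.mul (hgcont.comp (continuous_id.div_const t))).integrable_of_hasCompactSupport hcs2
    · refine (hI1.mul_const (C * (2 * R))).mono' hmeas2.norm.integral_prod_right' ?_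
      filter_upwards [ae_restrict_mem measurableSet_Ioo] with t ht
      have ht0 : (0:ℝ) < t := ht.1
      have h1t : (0:ℝ) < 1 - t := by linarith [ht.2]
      have hnn : (0:ℝ) ≤ ∫ x : ℝ, ‖((1 - t) ^ (κ - 1) * t⁻¹ : ℝ) • (f x * g (x / t))‖ :=
        integral_nonneg (fun x => norm_nonneg _)
      rw [Real.norm_eq_abs, abs_of_nonneg hnn]
      have e1 : ∀ x : ℝ, ‖((1 - t) ^ (κ - 1) * t⁻¹ : ℝ) • (f x * g (x / t))‖
          = ((1 - t) ^ (κ - 1) * t⁻¹) * ‖f x * g (x / t)‖ := by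
        intro x
        rw [norm_smul, Real.norm_eq_abs, abs_of_nonneg (by positivity)]
      simp_rw [e1]
      rw [integral_const_mul]
      have hsubst : (∫ x : ℝ, ‖f x * g (x / t)‖) = |t| • ∫ y : ℝ, ‖f (t * y) * g y‖ := by
        have h := MeasureTheory.Measure.integral_comp_div (fun y => ‖f (t * y) * g y‖) t
        have e : ∀ x : ℝ, t * (x / t) = x := fun x => by field_simp
        simpa only [e] using h
      have hcs3 : HasCompactSupport (fun y : ℝ => f (t * y) * g y) := hgc.mul_left
      have hint : Integrable (fun y : ℝ => ‖f (t * y) * g y‖) :=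
        ((hfc.comp (continuous_const.mul continuous_id)).mul
          hgcont).integrable_of_hasCompactSupport hcs3 |>.norm
      have hle : (∫ y : ℝ, ‖f (t * y) * g y‖) ≤ C * (2 * R) := by
        calc (∫ y : ℝ, ‖f (t * y) * g y‖)
            ≤ ∫ y : ℝ, (Icc (-R) R).indicator (fun _ => C) y :=
              integral_mono hint hind (fun y => hbound t ⟨ht0.le, ht.2.le⟩ y)
          _ = C * (2 * R) := by
              rw [integral_indicator_const _ measurableSet_Icc]
              rw [measureReal_def, Real.volume_Icc]
              rw [ENNReal.toReal_ofReal (by linarith), smul_eq_mul]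
              ring
      calc ((1 - t) ^ (κ - 1) * t⁻¹) * ∫ x : ℝ, ‖f x * g (x / t)‖
          = (1 - t) ^ (κ - 1) * ((t⁻¹ * |t|) * ∫ y : ℝ, ‖f (t * y) * g y‖) := by
            rw [hsubst, smul_eq_mul]; ring
        _ = (1 - t) ^ (κ - 1) * ∫ y : ℝ, ‖f (t * y) * g y‖ := by
            rw [abs_of_pos ht0, inv_mul_cancel₀ ht0.ne', one_mul]
        _ ≤ (1 - t) ^ (κ - 1) * (C * (2 * R)) :=
            mul_le_mul_of_nonneg_left hle (Real.rpow_nonneg h1t.le _)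
  have hx1 : ∀ x : ℝ, chiKappa κ f x * g x
      = (Real.Gamma κ)⁻¹ • ∫ t in Ioo (0:ℝ) 1, ((1 - t) ^ (κ - 1) : ℝ) • (f (t * x) * g x) := by
    intro x
    rw [chiKappa, smul_mul_assoc, intervalIntegral.integral_of_le zero_le_one,
      integral_Ioc_eq_integral_Ioo, ← integral_mul_const]
    simp_rw [smul_mul_assoc]
  have hae0 : ∀ᵐ x : ℝ, x ≠ (0:ℝ) := by
    rw [ae_iff]
    have hset0 : {x : ℝ | ¬ x ≠ (0:ℝ)} = {(0:ℝ)} := by ext x; simp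
    rw [hset0]
    exact measure_singleton 0
  calc ∫ x : ℝ, chiKappa κ f x * g x
      = (Real.Gamma κ)⁻¹ • ∫ x : ℝ, ∫ t in Ioo (0:ℝ) 1,
          ((1 - t) ^ (κ - 1) : ℝ) • (f (t * x) * g x) := by
        simp_rw [hx1]; rw [integral_smul]
    _ = (Real.Gamma κ)⁻¹ • ∫ t in Ioo (0:ℝ) 1, ∫ x : ℝ,
          ((1 - t) ^ (κ - 1) : ℝ) • (f (t * x) * g x) := by
        congr 1
        exact (integral_integral_swap hP1).symm
    _ = (Real.Gamma κ)⁻¹ • ∫ t in Ioo (0:ℝ) 1, ∫ x : ℝ,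
          ((1 - t) ^ (κ - 1) * t⁻¹ : ℝ) • (f x * g (x / t)) := by
        congr 1
        exact setIntegral_congr_fun measurableSet_Ioo (fun t ht => hsub t ht)
    _ = (Real.Gamma κ)⁻¹ • ∫ x : ℝ, ∫ t in Ioo (0:ℝ) 1,
          ((1 - t) ^ (κ - 1) * t⁻¹ : ℝ) • (f x * g (x / t)) := by
        congr 1
        exact integral_integral_swap hP2
    _ = ∫ x : ℝ, f x * tchiKappa κ g x := by
        rw [← integral_smul]
        refine integral_congr_ae ?_
        filter_upwards [hae0] with x hx
        rw [tchiKappa, tchi_integral_eq κ g hx, mul_smul_comm]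
        congr 1
        rw [← integral_const_mul]
        exact setIntegral_congr_fun measurableSet_Ioo
          (fun t ht => (mul_smul_comm _ _ _).symm)
end

section
/- Let κ = (κ_1,…,κ_N) ∈ (0,∞)^N and for j = 1,…,N define T_j f(x) = ∂_j f(x) + κ_j (f(x) - f(x_1,…,x_{j-1},0,x_{j+1},…,x_N))/x_j on analytic functions on ℝ^N. For λ ∈ ℂ^N, the function M_κ(λ,x) = ∏_{j=1}^N M(1, κ_j+1; iλ_j x_j) is the unique analytic solution u of the system T_j u = iλ_j u for all j, with u(0) = 1. -/
/-!
Along the `j`-th coordinate line through `x`, `T_j` restricts to the rank-one Dunkl operator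
`g ↦ g' + κ (g t - g 0) / t`, so everything reduces to one variable. There `M(1, κ + 1; a t)` is
an eigenfunction with eigenvalue `a` by the first-order Kummer relation
`z M' + κ M = κ + z M`, and it is the only one with value `1` at `0`: the difference `h` of two
solutions satisfies `t h' + κ h = a t h`, so `t ^ κ * exp (-a t) * h t` is constant on each
half-line and tends to `0` at `0` because `κ > 0`. Hence every solution satisfies
`u x = u (x with x_j = 0) * M(1, κ_j + 1; i λ_j x_j)`, and zeroing the coordinates one at a time
yields the product.
-/

/-- The direct-product Dunkl-type operator `T_j`, with the difference quotient
extended by continuity at points where `x_j = 0` (where its value is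
`(1 + κ_j) ∂_j u(x)`). -/
noncomputable def Tj {N : ℕ} (κ : Fin N → ℝ) (j : Fin N)
    (u : EuclideanSpace ℝ (Fin N) → ℂ) (x : EuclideanSpace ℝ (Fin N)) : ℂ :=
  if x j = 0 then
    (1 + (κ j : ℂ)) * fderiv ℝ u x (EuclideanSpace.single j 1)
  else
    fderiv ℝ u x (EuclideanSpace.single j 1) +
      (κ j : ℂ) * (u x - u (WithLp.toLp 2 (Function.update x j 0))) / (x j : ℂ)

open Complex Filter Topology Finset
open scoped Nat

/-- `M(1, κ + 1; z)`, since `(1)_n = n!`. -/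
noncomputable def kummerM (κ z : ℂ) : ℂ :=
  ∑' n : ℕ, z ^ n / (ascPochhammer ℂ n).eval (κ + 1)

noncomputable def kummerMDeriv (κ z : ℂ) : ℂ :=
  ∑' n : ℕ, (n + 1) * z ^ n / (ascPochhammer ℂ (n + 1)).eval (κ + 1)

section KummerM

variable {κ : ℂ}

theorem factorial_le_norm_ascPochhammer_eval (hκ : 0 ≤ κ.re) (n : ℕ) :
    (n ! : ℝ) ≤ ‖(ascPochhammer ℂ n).eval (κ + 1)‖ := by
  induction n with
  | zero => simp
  | succ n ih =>
    have hfactor : (n + 1 : ℝ) ≤ ‖κ + 1 + n‖ := by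
      calc (n + 1 : ℝ) ≤ (κ + 1 + n).re := by simp; linarith
        _ ≤ ‖κ + 1 + n‖ := re_le_norm _
    rw [ascPochhammer_succ_eval, norm_mul, Nat.factorial_succ, Nat.cast_mul, mul_comm]
    push_cast
    gcongr

theorem ascPochhammer_eval_ne_zero (hκ : 0 ≤ κ.re) (n : ℕ) :
    (ascPochhammer ℂ n).eval (κ + 1) ≠ 0 :=
  norm_pos_iff.mp ((Nat.cast_pos.mpr n.factorial_pos).trans_le
    (factorial_le_norm_ascPochhammer_eval hκ n))

theorem norm_pow_div_ascPochhammer_eval_le (hκ : 0 ≤ κ.re) (z : ℂ) (n : ℕ) :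
    ‖z ^ n / (ascPochhammer ℂ n).eval (κ + 1)‖ ≤ ‖z‖ ^ n / n ! := by
  rw [norm_div, norm_pow]
  exact div_le_div_of_nonneg_left (by positivity) (by positivity)
    (factorial_le_norm_ascPochhammer_eval hκ n)

theorem norm_kummerMDeriv_term_le (hκ : 0 ≤ κ.re) (z : ℂ) (n : ℕ) :
    ‖(n + 1) * z ^ n / (ascPochhammer ℂ (n + 1)).eval (κ + 1)‖ ≤ ‖z‖ ^ n / n ! := by
  have hP := factorial_le_norm_ascPochhammer_eval hκ (n + 1)
  push_cast [Nat.factorial_succ] at hP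
  have hn : ‖((n : ℂ) + 1)‖ = n + 1 := by norm_cast
  rw [norm_div, norm_mul, norm_pow, hn,
    div_le_div_iff₀ (norm_pos_iff.mpr (ascPochhammer_eval_ne_zero hκ _)) (by positivity)]
  nlinarith [mul_le_mul_of_nonneg_left hP (pow_nonneg (norm_nonneg z) n)]

theorem hasSum_kummerM (hκ : 0 ≤ κ.re) (z : ℂ) :
    HasSum (fun n : ℕ => z ^ n / (ascPochhammer ℂ n).eval (κ + 1)) (kummerM κ z) :=
  (Summable.of_norm_bounded (Real.summable_pow_div_factorial ‖z‖)
    (norm_pow_div_ascPochhammer_eval_le hκ z)).hasSum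

theorem hasSum_kummerMDeriv (hκ : 0 ≤ κ.re) (z : ℂ) :
    HasSum (fun n : ℕ => (n + 1) * z ^ n / (ascPochhammer ℂ (n + 1)).eval (κ + 1))
      (kummerMDeriv κ z) :=
  (Summable.of_norm_bounded (Real.summable_pow_div_factorial ‖z‖)
    (norm_kummerMDeriv_term_le hκ z)).hasSum

theorem kummerM_zero : kummerM κ 0 = 1 := by
  rw [kummerM, tsum_eq_single 0 fun n hn => by simp [zero_pow hn]]
  simp

theorem kummerMDeriv_zero : kummerMDeriv κ 0 = (κ + 1)⁻¹ := by
  rw [kummerMDeriv, tsum_eq_single 0 fun n hn => by simp [zero_pow hn]]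
  simp

theorem hasDerivAt_kummerM (hκ : 0 ≤ κ.re) (z : ℂ) :
    HasDerivAt (kummerM κ) (kummerMDeriv κ z) z := by
  have hshift : kummerM κ =
      fun w => 1 + ∑' n : ℕ, w ^ (n + 1) / (ascPochhammer ℂ (n + 1)).eval (κ + 1) := by
    funext w
    rw [kummerM, (hasSum_kummerM hκ w).summable.tsum_eq_zero_add]
    simp
  set R := ‖z‖ + 1
  have hderiv := hasDerivAt_tsum_of_isPreconnected (u := fun n => R ^ n / n !)
    (y := z) (g := fun (n : ℕ) (w : ℂ) => w ^ (n + 1) / (ascPochhammer ℂ (n + 1)).eval (κ + 1))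
    (g' := fun (n : ℕ) (w : ℂ) => (n + 1) * w ^ n / (ascPochhammer ℂ (n + 1)).eval (κ + 1))
    (Real.summable_pow_div_factorial R) Metric.isOpen_ball
    (convex_ball (0 : ℂ) R).isPreconnected (fun n w _ => ?_) (fun n w hw => ?_)
    (Metric.mem_ball_self (x := (0 : ℂ)) (by positivity)) ?_ (by simp [R])
  · rw [hshift]
    exact hderiv.const_add 1
  · simpa using (hasDerivAt_pow (n + 1) w).div_const ((ascPochhammer ℂ (n + 1)).eval (κ + 1))
  · have hwR : ‖w‖ ≤ R := by simpa using (Metric.mem_ball.mp hw).le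
    exact (norm_kummerMDeriv_term_le hκ w n).trans (by gcongr)
  · simp

theorem mul_kummerMDeriv_add (hκ : 0 ≤ κ.re) (z : ℂ) :
    z * kummerMDeriv κ z + κ * kummerM κ z = κ + z * kummerM κ z := by
  have hM := hasSum_kummerM hκ z
  have htail := (hasSum_nat_add_iff' 1).mpr hM
  simp only [range_one, sum_singleton, pow_zero, ascPochhammer_zero, Polynomial.eval_one,
    div_one] at htail
  have hsum := (hasSum_kummerMDeriv hκ z).mul_left z |>.add (htail.mul_left κ)
  have hterm : ∀ n : ℕ, z * ((n + 1) * z ^ n / (ascPochhammer ℂ (n + 1)).eval (κ + 1)) +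
      κ * (z ^ (n + 1) / (ascPochhammer ℂ (n + 1)).eval (κ + 1)) =
      z * (z ^ n / (ascPochhammer ℂ n).eval (κ + 1)) := by
    intro n
    have hsucc := ascPochhammer_eval_ne_zero hκ (n + 1)
    rw [ascPochhammer_succ_eval] at hsucc ⊢
    field_simp [mul_ne_zero_iff.mp hsucc]
    ring
  simp only [hterm] at hsum
  linear_combination hsum.unique (hM.mul_left z)

theorem differentiable_kummerM (hκ : 0 ≤ κ.re) : Differentiable ℂ (kummerM κ) :=
  fun z => (hasDerivAt_kummerM hκ z).differentiableAt

theorem hasDerivAt_kummerM_mul_ofReal (hκ : 0 ≤ κ.re) (a : ℂ) (t : ℝ) :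
    HasDerivAt (fun s : ℝ => kummerM κ (a * s)) (a * kummerMDeriv κ (a * t)) t := by
  simpa [mul_comm] using
    ((hasDerivAt_kummerM hκ (a * t)).comp (t : ℂ) ((hasDerivAt_id (t : ℂ)).const_mul a)).comp_ofReal

end KummerM

section IntegratingFactor

variable {κ : ℝ} {a : ℂ} {h : ℝ → ℂ}

theorem eq_zero_of_pos_of_mul_deriv_add_eq (hκ : 0 < κ) (hh : Differentiable ℝ h) (h0 : h 0 = 0)
    (heq : ∀ t, 0 < t → t * deriv h t + κ * h t = a * t * h t) {t : ℝ} (ht : 0 < t) :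
    h t = 0 := by
  set F : ℝ → ℂ := fun s => ((s ^ κ : ℝ) : ℂ) * exp (-(a * s)) * h s with hF
  have hF' : ∀ s, 0 < s → HasDerivAt F 0 s := by
    intro s hs
    have hpow := (Real.hasDerivAt_rpow_const (p := κ) (Or.inl hs.ne')).ofReal_comp
    have hexp : HasDerivAt (fun y : ℝ => exp (-(a * y))) (exp (-(a * s)) * -a) s := by
      simpa using ((hasDerivAt_id (s : ℂ)).const_mul a).neg.cexp.comp_ofReal
    refine ((hpow.mul hexp).mul (hh s).hasDerivAt).congr_deriv ?_
    have hsplit : s ^ κ = s ^ (κ - 1) * s := by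
      rw [← Real.rpow_add_one hs.ne']
      simp
    simp only [Pi.mul_apply, hsplit]
    push_cast
    linear_combination (((s ^ (κ - 1) : ℝ) : ℂ) * exp (-(a * s))) * heq s hs
  have hconst : ∀ s, 0 < s → F s = F t := fun s hs =>
    isOpen_Ioi.is_const_of_deriv_eq_zero isPreconnected_Ioi
      (fun y hy => (hF' y hy).differentiableAt.differentiableWithinAt)
      (fun y hy => (hF' y hy).deriv) hs ht
  have hlim : Tendsto F (𝓝[>] 0) (𝓝 (F 0)) := by
    refine (ContinuousAt.tendsto ?_).mono_left nhdsWithin_le_nhds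
    exact ((continuous_ofReal.continuousAt.comp (Real.continuousAt_rpow_const 0 κ
      (Or.inr hκ.le))).mul (by fun_prop)).mul (hh 0).continuousAt
  have hFt : F t = 0 := by
    have hev : F =ᶠ[𝓝[>] 0] fun _ => F t := eventually_nhdsWithin_of_forall hconst
    simpa [hF, h0] using tendsto_nhds_unique (tendsto_const_nhds.congr' hev.symm) hlim
  simpa [hF, exp_ne_zero, (Real.rpow_pos_of_pos ht κ).ne'] using hFt

theorem eq_zero_of_mul_deriv_add_eq (hκ : 0 < κ) (hh : Differentiable ℝ h) (h0 : h 0 = 0)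
    (heq : ∀ t, t ≠ 0 → t * deriv h t + κ * h t = a * t * h t) (t : ℝ) : h t = 0 := by
  rcases lt_trichotomy t 0 with ht | rfl | ht
  · have hrefl := eq_zero_of_pos_of_mul_deriv_add_eq (a := -a) (h := fun s => h (-s)) hκ
      (hh.comp differentiable_neg) (by simpa using h0) (fun s hs => ?_) (neg_pos.mpr ht)
    · simpa using hrefl
    · rw [deriv_comp_neg]
      have := heq (-s) (by linarith)
      push_cast at this ⊢
      linear_combination this
  · exact h0
  · exact eq_zero_of_pos_of_mul_deriv_add_eq hκ hh h0 (fun s hs => heq s hs.ne') ht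

end IntegratingFactor

noncomputable def dunklOp (κ : ℝ) (g : ℝ → ℂ) (t : ℝ) : ℂ :=
  if t = 0 then (1 + (κ : ℂ)) * deriv g t else deriv g t + (κ : ℂ) * (g t - g 0) / (t : ℂ)

section DunklOp

variable {κ : ℝ}

theorem dunklOp_const_mul_kummerM (hκ : 0 ≤ κ) (a c : ℂ) (t : ℝ) :
    dunklOp κ (fun s => c * kummerM κ (a * s)) t = a * (c * kummerM κ (a * t)) := by
  have hκ' : 0 ≤ (κ : ℂ).re := by simpa using hκ
  rw [dunklOp, ((hasDerivAt_kummerM_mul_ofReal hκ' a t).const_mul c).deriv]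
  split_ifs with ht
  · have hκ1 : (κ : ℂ) + 1 ≠ 0 := by
      simpa using ascPochhammer_eval_ne_zero hκ' 1
    subst ht
    simp only [ofReal_zero, mul_zero, kummerMDeriv_zero, kummerM_zero]
    field_simp
    ring
  · have ht' : (t : ℂ) ≠ 0 := by exact_mod_cast ht
    simp only [ofReal_zero, mul_zero, kummerM_zero]
    field_simp
    linear_combination c * mul_kummerMDeriv_add hκ' (a * t)

theorem eq_mul_kummerM_of_dunklOp_eq (hκ : 0 < κ) {g : ℝ → ℂ} (hg : Differentiable ℝ g) {a : ℂ}
    (hdunkl : ∀ t, dunklOp κ g t = a * g t) (t : ℝ) : g t = g 0 * kummerM κ (a * t) := by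
  have hκ' : 0 ≤ (κ : ℂ).re := by simpa using hκ.le
  have hderiv : ∀ s, HasDerivAt (fun s => g s - g 0 * kummerM κ (a * s))
      (deriv g s - g 0 * (a * kummerMDeriv κ (a * s))) s := fun s =>
    (hg s).hasDerivAt.sub ((hasDerivAt_kummerM_mul_ofReal hκ' a s).const_mul (g 0))
  refine sub_eq_zero.mp (eq_zero_of_mul_deriv_add_eq hκ (a := a)
    (fun s => (hderiv s).differentiableAt) (by simp [kummerM_zero]) (fun s hs => ?_) t)
  have hs' : (s : ℂ) ≠ 0 := by exact_mod_cast hs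
  have hgs := hdunkl s
  rw [dunklOp, if_neg hs] at hgs
  field_simp at hgs
  rw [(hderiv s).deriv]
  linear_combination hgs - g 0 * mul_kummerMDeriv_add hκ' (a * s)

end DunklOp

theorem apply_eq_apply_zero_mul_prod {ι α M : Type*} [Fintype ι] [DecidableEq ι] [Zero α]
    [CommMonoid M] {u : (ι → α) → M} {F : ι → α → M}
    (h : ∀ x j, u x = u (Function.update x j 0) * F j (x j)) (x : ι → α) :
    u x = u 0 * ∏ j, F j (x j) := by
  suffices ∀ s : Finset ι, u x = u (s.piecewise 0 x) * ∏ j ∈ s, F j (x j) by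
    simpa using this univ
  intro s
  induction s using Finset.induction_on with
  | empty => simp
  | insert j s hj ih =>
    rw [ih, h (s.piecewise 0 x) j, piecewise_eq_of_notMem _ _ _ hj, prod_insert hj,
      piecewise_insert, Pi.zero_apply, mul_assoc, mul_comm (F j (x j))]

theorem prod_apply_update {ι α M : Type*} [Fintype ι] [DecidableEq ι] [CommMonoid M]
    (F : ι → α → M) (x : ι → α) (j : ι) (t : α) :
    ∏ k, F k (Function.update x j t k) = F j t * ∏ k ∈ univ \ {j}, F k (x k) := by
  simp only [Function.apply_update F, prod_update_of_mem (mem_univ j)]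

theorem hasDerivAt_toLp_update {ι : Type*} [Fintype ι] [DecidableEq ι] (x : EuclideanSpace ℝ ι)
    (j : ι) (t : ℝ) :
    HasDerivAt (fun s : ℝ => (WithLp.toLp 2 (Function.update x j s) : EuclideanSpace ℝ ι))
      (EuclideanSpace.single j 1) t :=
  (EuclideanSpace.equiv ι ℝ).symm.hasFDerivAt.comp_hasDerivAt t (hasDerivAt_update x.ofLp j t)

theorem Tj_eq_dunklOp {N : ℕ} (κ : Fin N → ℝ) (j : Fin N) {u : EuclideanSpace ℝ (Fin N) → ℂ}
    {x : EuclideanSpace ℝ (Fin N)} (hu : DifferentiableAt ℝ u x) :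
    Tj κ j u x = dunklOp (κ j) (fun t => u (WithLp.toLp 2 (Function.update x j t))) (x j) := by
  have hx : WithLp.toLp 2 (Function.update x j (x j)) = x := by simp
  have hderiv : HasDerivAt (fun t => u (WithLp.toLp 2 (Function.update x j t)))
      (fderiv ℝ u x (EuclideanSpace.single j 1)) (x j) := by
    have := (hx ▸ hu).hasFDerivAt.comp_hasDerivAt (x j) (hasDerivAt_toLp_update x j (x j))
    rwa [hx] at this
  rw [Tj, dunklOp, hderiv.deriv, hx]

/-- `M_κ(λ, x)`. -/
noncomputable def kummerProduct {N : ℕ} (κ : Fin N → ℝ) (lam : Fin N → ℂ)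
    (x : EuclideanSpace ℝ (Fin N)) : ℂ :=
  ∏ j, kummerM (κ j) (I * lam j * x j)

section KummerProduct

variable {N : ℕ} {κ : Fin N → ℝ} (lam : Fin N → ℂ)

theorem kummerProduct_zero : kummerProduct κ lam 0 = 1 := by
  simp [kummerProduct, kummerM_zero]

theorem analyticAt_kummerProduct (hκ : ∀ j, 0 ≤ κ j) (x : EuclideanSpace ℝ (Fin N)) :
    AnalyticAt ℝ (kummerProduct κ lam) x := by
  refine Finset.analyticAt_fun_prod _ fun j _ => ?_
  have hκ' : 0 ≤ (κ j : ℂ).re := by simpa using hκ j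
  exact ((differentiable_kummerM hκ').analyticAt _).restrictScalars.comp
    (((I * lam j) • (ofRealCLM.comp (EuclideanSpace.proj j))).analyticAt x)

theorem Tj_kummerProduct (hκ : ∀ j, 0 ≤ κ j) (j : Fin N) (x : EuclideanSpace ℝ (Fin N)) :
    Tj κ j (kummerProduct κ lam) x = I * lam j * kummerProduct κ lam x := by
  set c := ∏ k ∈ univ \ {j}, kummerM (κ k) (I * lam k * x k)
  have hline : (fun t => kummerProduct κ lam (WithLp.toLp 2 (Function.update x j t))) =
      fun t : ℝ => c * kummerM (κ j) (I * lam j * t) := by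
    funext t
    exact (prod_apply_update (fun k (s : ℝ) => kummerM (κ k) (I * lam k * s)) x.ofLp j t).trans
      (mul_comm _ _)
  rw [Tj_eq_dunklOp κ j (analyticAt_kummerProduct lam hκ x).differentiableAt, hline,
    dunklOp_const_mul_kummerM (hκ j), kummerProduct,
    prod_eq_mul_prod_sdiff_singleton_of_mem (mem_univ j), mul_comm c]

theorem eq_kummerProduct_of_Tj_eq (hκ : ∀ j, 0 < κ j) {u : EuclideanSpace ℝ (Fin N) → ℂ}
    (hu : Differentiable ℝ u) (h0 : u 0 = 1)
    (hT : ∀ j x, Tj κ j u x = I * lam j * u x) : u = kummerProduct κ lam := by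
  have hline : ∀ x j, u x = u (WithLp.toLp 2 (Function.update x j 0)) *
      kummerM (κ j) (I * lam j * x j) := by
    intro x j
    have hdunkl : ∀ t, dunklOp (κ j) (fun s => u (WithLp.toLp 2 (Function.update x j s))) t =
        I * lam j * u (WithLp.toLp 2 (Function.update x j t)) := by
      intro t
      rw [← hT, Tj_eq_dunklOp κ j (hu _)]
      simp
    simpa using eq_mul_kummerM_of_dunklOp_eq (hκ j)
      (fun t => (hu _).comp t (hasDerivAt_toLp_update x j t).differentiableAt) hdunkl (x j)
  funext x
  simpa [h0, kummerProduct] using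
    apply_eq_apply_zero_mul_prod (u := fun y => u (WithLp.toLp 2 y))
      (F := fun j t => kummerM (κ j) (I * lam j * t)) (fun y j => hline (WithLp.toLp 2 y) j) x.ofLp

end KummerProduct

theorem direct_product_eigenfunction {N : ℕ} (κ : Fin N → ℝ) (hκ : ∀ j, 0 < κ j)
    (lam : Fin N → ℂ) (u : EuclideanSpace ℝ (Fin N) → ℂ) :
    ((∀ x, AnalyticAt ℝ u x) ∧ u 0 = 1 ∧
        (∀ (j : Fin N) (x : EuclideanSpace ℝ (Fin N)),
          Tj κ j u x = Complex.I * lam j * u x)) ↔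
      (∀ x : EuclideanSpace ℝ (Fin N), u x =
        ∏ j, ∑' n : ℕ, (Complex.I * lam j * (x j : ℂ)) ^ n /
          (ascPochhammer ℂ n).eval ((κ j : ℂ) + 1)) := by
  change _ ↔ ∀ x, u x = kummerProduct κ lam x
  rw [← funext_iff]
  constructor
  · rintro ⟨hA, h0, hT⟩
    exact eq_kummerProduct_of_Tj_eq lam hκ (fun x => (hA x).differentiableAt) h0 hT
  · rintro rfl
    exact ⟨analyticAt_kummerProduct lam fun j => (hκ j).le, kummerProduct_zero lam,
      Tj_kummerProduct lam fun j => (hκ j).le⟩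
end
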